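/- arXiv:1910.05269 — 2 statements merged into one kernel-verified Lean document; each statement's English description precedes it below -/
import Mathlib

section
/- Let f_j(z) = z^j/√(j!) for 0 ≤ j ≤ N (the Weyl polynomials), and let K = (K₁,K₂) ∈ ℝ². Then for every z ∈ ℂ the density function satisfies lim_{N→∞} h_{N,K}(z) = (1/π) · exp(−(K₁²+K₂²)/(2·e^{|z|²})) · (1 + (K₁²+K₂²)·|z|²/(2·e^{|z|²})). In particular, for K = (0,0) the limit equals 1/π. -/
/-!
The Weyl system satisfies `f_{k+1}(z) = z f_k(z) / √(k+1)` and `f_{k+1}' = √(k+1) f_k`, hence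
`|f_k(z)|² = |z|^{2k}/k!`, and after a shift of the index the kernels `B₀`, `B₁`, `B₂` are
partial sums of the series of `e^{|z|²}`, `z̄ e^{|z|²}` and `(|z|² + 1) e^{|z|²}`. The density
`h_{N,K}(z)` is a continuous function of `(B₀, B₁, B₂)` wherever `B₀ ≠ 0`, so it converges to
the value of that function at these limits.
-/

open Finset

noncomputable def B0 (f : ℕ → ℂ → ℂ) (N : ℕ) (z : ℂ) : ℝ :=
  ∑ j ∈ Finset.range (N + 1), ‖f j z‖ ^ 2

noncomputable def B1 (f : ℕ → ℂ → ℂ) (N : ℕ) (z : ℂ) : ℂ :=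
  ∑ j ∈ Finset.range (N + 1), (starRingEnd ℂ) (f j z) * deriv (f j) z

noncomputable def B2 (f : ℕ → ℂ → ℂ) (N : ℕ) (z : ℂ) : ℝ :=
  ∑ j ∈ Finset.range (N + 1), ‖deriv (f j) z‖ ^ 2

noncomputable def hDen (f : ℕ → ℂ → ℂ) (N : ℕ) (K₁ K₂ : ℝ) (z : ℂ) : ℝ :=
  Real.exp (-(K₁ ^ 2 + K₂ ^ 2) / (2 * B0 f N z)) / (Real.pi * B0 f N z) *
    (B2 f N z - ‖B1 f N z‖ ^ 2 / B0 f N z *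
      (1 - (K₁ ^ 2 + K₂ ^ 2) / (2 * B0 f N z)))

open Filter Topology

theorem tendsto_hDen {f : ℕ → ℂ → ℂ} {z : ℂ} {b₀ b₂ : ℝ} {b₁ : ℂ} (K₁ K₂ : ℝ)
    (h₀ : Tendsto (fun N => B0 f N z) atTop (𝓝 b₀)) (hb₀ : b₀ ≠ 0)
    (h₁ : Tendsto (fun N => B1 f N z) atTop (𝓝 b₁))
    (h₂ : Tendsto (fun N => B2 f N z) atTop (𝓝 b₂)) :
    Tendsto (fun N => hDen f N K₁ K₂ z) atTop
      (𝓝 (Real.exp (-(K₁ ^ 2 + K₂ ^ 2) / (2 * b₀)) / (Real.pi * b₀) *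
        (b₂ - ‖b₁‖ ^ 2 / b₀ * (1 - (K₁ ^ 2 + K₂ ^ 2) / (2 * b₀))))) := by
  have hK (c : ℝ) : Tendsto (fun N => c / (2 * B0 f N z)) atTop (𝓝 (c / (2 * b₀))) :=
    tendsto_const_nhds.div (h₀.const_mul 2) (mul_ne_zero two_ne_zero hb₀)
  exact ((hK _).rexp.div (h₀.const_mul _) (mul_ne_zero Real.pi_ne_zero hb₀)).mul
    (h₂.sub (((h₁.norm.pow 2).div h₀ hb₀).mul (tendsto_const_nhds.sub (hK _))))

theorem sqrt_factorial_succ (k : ℕ) :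
    Real.sqrt (k + 1).factorial = Real.sqrt (k + 1) * Real.sqrt k.factorial := by
  rw [Nat.factorial_succ, Nat.cast_mul, Real.sqrt_mul (by positivity)]
  push_cast
  rfl

noncomputable def weyl (j : ℕ) (w : ℂ) : ℂ := w ^ j / (Real.sqrt (Nat.factorial j) : ℂ)

section Weyl

variable (z : ℂ)

theorem norm_weyl_sq (j : ℕ) : ‖weyl j z‖ ^ 2 = (‖z‖ ^ 2) ^ j / j.factorial := by
  rw [weyl, norm_div, norm_pow, div_pow, Complex.norm_real, Real.norm_of_nonneg (by positivity),
    Real.sq_sqrt (by positivity), ← pow_mul, ← pow_mul, mul_comm]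

theorem weyl_succ (k : ℕ) : weyl (k + 1) z = z / Real.sqrt (k + 1) * weyl k z := by
  rw [weyl, weyl, sqrt_factorial_succ, pow_succ', Complex.ofReal_mul]
  ring

theorem deriv_weyl_succ (k : ℕ) : deriv (weyl (k + 1)) z = Real.sqrt (k + 1) * weyl k z := by
  have hk : (Real.sqrt (k + 1) : ℂ) ≠ 0 := by norm_cast; positivity
  have hf : (Real.sqrt k.factorial : ℂ) ≠ 0 := by norm_cast; positivity
  have hsq : ((k : ℂ) + 1) = (Real.sqrt (k + 1) : ℂ) ^ 2 := by
    norm_cast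
    rw [Real.sq_sqrt (by positivity)]
  rw [show weyl (k + 1) = fun w => w ^ (k + 1) / (Real.sqrt (k + 1).factorial : ℂ) from rfl,
    deriv_div_const, deriv_pow_field, weyl, sqrt_factorial_succ]
  push_cast
  rw [hsq]
  field_simp

theorem deriv_weyl_zero : deriv (weyl 0) z = 0 := by
  simp [show weyl 0 = fun _ => 1 by ext; simp [weyl]]

theorem hasSum_norm_weyl_sq : HasSum (fun j => ‖weyl j z‖ ^ 2) (Real.exp (‖z‖ ^ 2)) := by
  simpa only [norm_weyl_sq, Real.exp_eq_exp_ℝ] using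
    NormedSpace.expSeries_div_hasSum_exp (‖z‖ ^ 2)

theorem succ_mul_norm_weyl_succ_sq (k : ℕ) :
    (k + 1) * ‖weyl (k + 1) z‖ ^ 2 = ‖z‖ ^ 2 * ‖weyl k z‖ ^ 2 := by
  rw [weyl_succ, norm_mul, norm_div, Complex.norm_real, Real.norm_of_nonneg (by positivity)]
  field_simp
  rw [Real.sq_sqrt (by positivity)]
  ring

theorem hasSum_succ_mul_norm_weyl_sq :
    HasSum (fun k : ℕ => (k + 1) * ‖weyl k z‖ ^ 2) ((‖z‖ ^ 2 + 1) * Real.exp (‖z‖ ^ 2)) := by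
  have hmul : HasSum (fun k : ℕ => k * ‖weyl k z‖ ^ 2) (‖z‖ ^ 2 * Real.exp (‖z‖ ^ 2)) := by
    rw [← hasSum_nat_add_iff' 1]
    simpa [succ_mul_norm_weyl_succ_sq] using (hasSum_norm_weyl_sq z).mul_left (‖z‖ ^ 2)
  simpa only [add_mul, one_mul] using hmul.add (hasSum_norm_weyl_sq z)

theorem B1_weyl_succ (N : ℕ) : B1 weyl (N + 1) z = (starRingEnd ℂ) z * B0 weyl N z := by
  rw [B1, sum_range_succ', deriv_weyl_zero, mul_zero, add_zero, B0, Complex.ofReal_sum, mul_sum]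
  refine sum_congr rfl fun k _ => ?_
  have hk : (Real.sqrt (k + 1) : ℂ) ≠ 0 := by norm_cast; positivity
  rw [deriv_weyl_succ, weyl_succ, map_mul, map_div₀, Complex.conj_ofReal, Complex.ofReal_pow,
    ← Complex.conj_mul']
  field_simp

theorem B2_weyl_succ (N : ℕ) :
    B2 weyl (N + 1) z = ∑ k ∈ range (N + 1), (k + 1) * ‖weyl k z‖ ^ 2 := by
  rw [B2, sum_range_succ', deriv_weyl_zero, norm_zero, zero_pow two_ne_zero, add_zero]
  refine sum_congr rfl fun k _ => ?_
  rw [deriv_weyl_succ, norm_mul, mul_pow, Complex.norm_real, Real.norm_of_nonneg (by positivity),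
    Real.sq_sqrt (by positivity)]

theorem tendsto_B0_weyl : Tendsto (fun N => B0 weyl N z) atTop (𝓝 (Real.exp (‖z‖ ^ 2))) :=
  (tendsto_add_atTop_iff_nat 1).2 (hasSum_norm_weyl_sq z).tendsto_sum_nat

theorem tendsto_B1_weyl :
    Tendsto (fun N => B1 weyl N z) atTop (𝓝 ((starRingEnd ℂ) z * Real.exp (‖z‖ ^ 2))) := by
  rw [← tendsto_add_atTop_iff_nat 1]
  simp only [B1_weyl_succ]
  exact tendsto_const_nhds.mul ((Complex.continuous_ofReal.tendsto _).comp (tendsto_B0_weyl z))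

theorem tendsto_B2_weyl :
    Tendsto (fun N => B2 weyl N z) atTop (𝓝 ((‖z‖ ^ 2 + 1) * Real.exp (‖z‖ ^ 2))) := by
  rw [← tendsto_add_atTop_iff_nat 1]
  simp only [B2_weyl_succ]
  exact (tendsto_add_atTop_iff_nat 1).2 (hasSum_succ_mul_norm_weyl_sq z).tendsto_sum_nat

theorem tendsto_hDen_weyl (K₁ K₂ : ℝ) :
    Tendsto (fun N => hDen weyl N K₁ K₂ z) atTop
      (𝓝 (1 / Real.pi * Real.exp (-(K₁ ^ 2 + K₂ ^ 2) / (2 * Real.exp (‖z‖ ^ 2))) *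
        (1 + (K₁ ^ 2 + K₂ ^ 2) * ‖z‖ ^ 2 / (2 * Real.exp (‖z‖ ^ 2))))) := by
  convert tendsto_hDen K₁ K₂ (tendsto_B0_weyl z) (Real.exp_pos _).ne' (tendsto_B1_weyl z)
    (tendsto_B2_weyl z) using 2
  rw [norm_mul, Complex.norm_conj, Complex.norm_real, Real.norm_of_nonneg (Real.exp_pos _).le]
  field_simp
  ring

end Weyl

/-- Theorem (Weyl polynomials): with `f_j(z) = z^j/√(j!)`,
`lim_N h_{N,K}(z) = (1/π) e^{-(K₁²+K₂²)/(2e^{|z|²})} (1 + (K₁²+K₂²)|z|²/(2e^{|z|²}))`;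
in particular for `K = (0,0)` the limit is `1/π`. -/
theorem density_limit_weyl (K₁ K₂ : ℝ) (z : ℂ) :
    Tendsto
      (fun N : ℕ =>
        hDen (fun j w => w ^ j / (Real.sqrt (Nat.factorial j) : ℂ)) N K₁ K₂ z)
      atTop
      (𝓝 (1 / Real.pi *
        Real.exp (-(K₁ ^ 2 + K₂ ^ 2) / (2 * Real.exp (‖z‖ ^ 2))) *
        (1 + (K₁ ^ 2 + K₂ ^ 2) * ‖z‖ ^ 2 /
          (2 * Real.exp (‖z‖ ^ 2))))) ∧
    Tendsto
      (fun N : ℕ =>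
        hDen (fun j w => w ^ j / (Real.sqrt (Nat.factorial j) : ℂ)) N 0 0 z)
      atTop (𝓝 (1 / Real.pi)) := by
  refine ⟨tendsto_hDen_weyl z K₁ K₂, ?_⟩
  show Tendsto (fun N => hDen weyl N 0 0 z) atTop _
  simpa using tendsto_hDen_weyl z 0 0
end

section
/- Let N be a positive integer, let p_0,…,p_{N+1} : ℂ → ℂ be polynomial functions with real coefficients, and let c ∈ ℝ, c ≠ 0, be such that the Christoffel–Darboux formula holds: for all z, w ∈ ℂ with z ≠ w, Σ_{j=0}^N p_j(z)·p_j(w) = c·(p_{N+1}(z)·p_N(w) − p_N(z)·p_{N+1}(w))/(z − w). Let z ∈ ℂ with Im(z) ≠ 0 and Σ_{j=0}^N |p_j(z)|² > 0. Then for K = (0,0) the density function built from f_j = p_j satisfies h_{N,0}(z) = (1/π)·[ Im(p_{N+1}′(z)·conj(p_N′(z)))/Im(p_{N+1}(z)·conj(p_N(z))) − |conj(p_N(z))·p_{N+1}′(z) − conj(p_{N+1}(z))·p_N′(z)|²/(4·Im(p_{N+1}(z)·conj(p_N(z)))²) + 1/(4·Im(z)²) ]. -/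
/-!
Put `K(z, w) = ∑ⱼ pⱼ(z) pⱼ(w)`. Since the `pⱼ` have real coefficients, `B₀ = K(z, z̄)`,
`B₁ = ∂_z K(z, z̄)` and `B₂ = ∂_z ∂_w K(z, z̄)`. Cleared of its denominator, the
Christoffel–Darboux formula `(z - w) K(z, w) = c (p_{N+1}(z) p_N(w) - p_N(z) p_{N+1}(w))` holds for
all `z, w`, so it can be differentiated in `z` and then in `w`. At `w = z̄` the three resulting
identities determine `B₀`, `B₁`, `B₂` in terms of `p_N`, `p_{N+1}` and their derivatives, and
`h_{N,0} = (B₀ B₂ - |B₁|²) / (π B₀²)` becomes an algebraic identity.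
-/

open Finset

open ComplexConjugate Polynomial

def IsRealPolynomialFun (f : ℂ → ℂ) : Prop :=
  ∃ q : ℝ[X], ∀ z, f z = aeval z q

namespace IsRealPolynomialFun

variable {f : ℂ → ℂ}

theorem differentiable (hf : IsRealPolynomialFun f) : Differentiable ℂ f := by
  obtain ⟨q, hq⟩ := hf
  rw [funext hq]
  exact q.differentiable_aeval

theorem map_conj (hf : IsRealPolynomialFun f) (z : ℂ) : f (conj z) = conj (f z) := by
  obtain ⟨q, hq⟩ := hf
  rw [hq, hq, aeval_conj]

theorem deriv_map_conj (hf : IsRealPolynomialFun f) (z : ℂ) :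
    deriv f (conj z) = conj (deriv f z) := by
  obtain ⟨q, hq⟩ := hf
  simp only [funext hq, Polynomial.deriv_aeval, aeval_conj]

end IsRealPolynomialFun

def ChristoffelDarboux {ι : Type*} (s : Finset ι) (f : ι → ℂ → ℂ) (P Q : ℂ → ℂ) (c : ℂ) :
    Prop :=
  ∀ z w : ℂ, z ≠ w → ∑ j ∈ s, f j z * f j w = c * (P z * Q w - Q z * P w) / (z - w)

namespace ChristoffelDarboux

variable {ι : Type*} {s : Finset ι} {f : ι → ℂ → ℂ} {P Q : ℂ → ℂ} {c : ℂ}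

/-- On the diagonal both sides vanish. -/
theorem sub_mul_sum_eq (h : ChristoffelDarboux s f P Q c) (z w : ℂ) :
    (z - w) * ∑ j ∈ s, f j z * f j w = c * (P z * Q w - Q z * P w) := by
  rcases eq_or_ne z w with rfl | hzw
  · ring
  · rw [h z w hzw, mul_div_cancel₀ _ (sub_ne_zero.mpr hzw)]

theorem sub_mul_sum_eq_deriv_fst (h : ChristoffelDarboux s f P Q c)
    (hf : ∀ j ∈ s, Differentiable ℂ (f j)) (hP : Differentiable ℂ P) (hQ : Differentiable ℂ Q)
    (z w : ℂ) :
    ∑ j ∈ s, f j z * f j w + (z - w) * ∑ j ∈ s, deriv (f j) z * f j w =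
      c * (deriv P z * Q w - deriv Q z * P w) := by
  have hL : HasDerivAt (fun t => (t - w) * ∑ j ∈ s, f j t * f j w)
      (1 * ∑ j ∈ s, f j z * f j w + (z - w) * ∑ j ∈ s, deriv (f j) z * f j w) z :=
    ((hasDerivAt_id z).sub_const w).mul
      (HasDerivAt.fun_sum fun j hj => ((hf j hj z).hasDerivAt).mul_const _)
  have hR : HasDerivAt (fun t => c * (P t * Q w - Q t * P w))
      (c * (deriv P z * Q w - deriv Q z * P w)) z :=
    (((hP z).hasDerivAt.mul_const _).sub ((hQ z).hasDerivAt.mul_const _)).const_mul c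
  simp_rw [h.sub_mul_sum_eq _ w] at hL
  simpa using hL.unique hR

theorem sub_mul_sum_eq_deriv_fst_snd (h : ChristoffelDarboux s f P Q c)
    (hf : ∀ j ∈ s, Differentiable ℂ (f j)) (hP : Differentiable ℂ P) (hQ : Differentiable ℂ Q)
    (z w : ℂ) :
    ∑ j ∈ s, f j z * deriv (f j) w - ∑ j ∈ s, deriv (f j) z * f j w +
        (z - w) * ∑ j ∈ s, deriv (f j) z * deriv (f j) w =
      c * (deriv P z * deriv Q w - deriv Q z * deriv P w) := by
  have hL : HasDerivAt
      (fun u => ∑ j ∈ s, f j z * f j u + (z - u) * ∑ j ∈ s, deriv (f j) z * f j u)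
      (∑ j ∈ s, f j z * deriv (f j) w + ((-1) * ∑ j ∈ s, deriv (f j) z * f j w +
        (z - w) * ∑ j ∈ s, deriv (f j) z * deriv (f j) w)) w :=
    (HasDerivAt.fun_sum fun j hj => ((hf j hj w).hasDerivAt).const_mul _).add
      (((hasDerivAt_id w).const_sub z).mul
        (HasDerivAt.fun_sum fun j hj => ((hf j hj w).hasDerivAt).const_mul _))
  have hR : HasDerivAt (fun u => c * (deriv P z * Q u - deriv Q z * P u))
      (c * (deriv P z * deriv Q w - deriv Q z * deriv P w)) w :=
    (((hQ w).hasDerivAt.const_mul _).sub ((hP w).hasDerivAt.const_mul _)).const_mul c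
  simp_rw [h.sub_mul_sum_eq_deriv_fst hf hP hQ z] at hL
  rw [← hL.unique hR]
  ring

end ChristoffelDarboux

section Kernels

variable {f : ℕ → ℂ → ℂ} {N : ℕ} {z : ℂ}

theorem ofReal_B0_eq_sum (hf : ∀ j ∈ range (N + 1), f j (conj z) = conj (f j z)) :
    (B0 f N z : ℂ) = ∑ j ∈ range (N + 1), f j z * f j (conj z) := by
  push_cast [B0]
  exact sum_congr rfl fun j hj => by rw [hf j hj, Complex.mul_conj']

theorem B1_eq_sum (hf : ∀ j ∈ range (N + 1), f j (conj z) = conj (f j z)) :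
    B1 f N z = ∑ j ∈ range (N + 1), deriv (f j) z * f j (conj z) :=
  sum_congr rfl fun j hj => by rw [hf j hj, mul_comm]

theorem conj_B1_eq_sum
    (hf' : ∀ j ∈ range (N + 1), deriv (f j) (conj z) = conj (deriv (f j) z)) :
    conj (B1 f N z) = ∑ j ∈ range (N + 1), f j z * deriv (f j) (conj z) := by
  rw [B1, map_sum]
  exact sum_congr rfl fun j hj => by rw [hf' j hj, map_mul, Complex.conj_conj]

theorem ofReal_B2_eq_sum
    (hf' : ∀ j ∈ range (N + 1), deriv (f j) (conj z) = conj (deriv (f j) z)) :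
    (B2 f N z : ℂ) = ∑ j ∈ range (N + 1), deriv (f j) z * deriv (f j) (conj z) := by
  push_cast [B2]
  exact sum_congr rfl fun j hj => by rw [hf' j hj, Complex.mul_conj']

end Kernels

theorem hDen_zero_zero (f : ℕ → ℂ → ℂ) (N : ℕ) (z : ℂ) :
    hDen f N 0 0 z = (B0 f N z * B2 f N z - ‖B1 f N z‖ ^ 2) / (Real.pi * B0 f N z ^ 2) := by
  rcases eq_or_ne (B0 f N z) 0 with h | h
  · simp [hDen, h]
  · simp only [hDen, sq, add_zero, mul_zero, neg_zero, zero_div, sub_zero, mul_one, Real.exp_zero]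
    field_simp

/-- The real form of `density_identity`: `y = Im z`, `a + b i = B₁`, `e = Im (P Q̄)`,
`m = Im (P' Q̄')` and `f₁ + f₂ i = P' Q̄ - Q' P̄`. -/
theorem density_identity_real {B₀ B₂ a b y c e m f₁ f₂ : ℝ} (hy : y ≠ 0) (hB₀ : B₀ ≠ 0)
    (h₀ : y * B₀ = c * e) (h₁re : B₀ - 2 * y * b = c * f₁) (h₁im : 2 * y * a = c * f₂)
    (h₂ : y * B₂ - b = c * m) :
    (B₀ * B₂ - (a ^ 2 + b ^ 2)) / B₀ ^ 2 =
      m / e - (f₁ ^ 2 + f₂ ^ 2) / (4 * e ^ 2) + 1 / (4 * y ^ 2) := by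
  have he : e ≠ 0 := by
    rintro rfl
    exact mul_ne_zero hy hB₀ (by simpa using h₀)
  obtain rfl : a = c * f₂ / (2 * y) := by rw [eq_div_iff (by simpa)]; linarith
  obtain rfl : B₂ = (c * m + b) / y := by rw [eq_div_iff hy]; linarith
  obtain rfl : b = (B₀ - c * f₁) / (2 * y) := by rw [eq_div_iff (by simpa)]; linarith
  obtain rfl : c = y * B₀ / e := by rw [eq_div_iff he]; linarith
  field_simp
  ring

theorem Complex.mul_conj_sub_mul_conj (u v : ℂ) :
    u * conj v - v * conj u = (2 * (u * conj v).im : ℝ) * I := by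
  simpa [mul_comm] using Complex.sub_conj (u * conj v)

theorem density_identity {B₀ B₂ c : ℝ} {B₁ z P Q P' Q' : ℂ} (hz : z.im ≠ 0) (hB₀ : B₀ ≠ 0)
    (h₀ : (z - conj z) * B₀ = c * (P * conj Q - Q * conj P))
    (h₁ : B₀ + (z - conj z) * B₁ = c * (P' * conj Q - Q' * conj P))
    (h₂ : conj B₁ - B₁ + (z - conj z) * B₂ = c * (P' * conj Q' - Q' * conj P')) :
    (B₀ * B₂ - ‖B₁‖ ^ 2) / B₀ ^ 2 =
      (P' * conj Q').im / (P * conj Q).im -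
        ‖conj Q * P' - conj P * Q'‖ ^ 2 / (4 * (P * conj Q).im ^ 2) + 1 / (4 * z.im ^ 2) := by
  rw [Complex.sub_conj, Complex.mul_conj_sub_mul_conj] at h₀ h₂
  rw [Complex.sub_conj] at h₁
  rw [← neg_sub, Complex.sub_conj] at h₂
  rw [show conj Q * P' - conj P * Q' = P' * conj Q - Q' * conj P by ring,
    Complex.sq_norm, Complex.normSq_apply, Complex.sq_norm, Complex.normSq_apply, ← sq, ← sq, ← sq,
    ← sq]
  generalize (P * conj Q).im = e at h₀ ⊢
  generalize (P' * conj Q').im = m at h₂ ⊢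
  generalize P' * conj Q - Q' * conj P = F at h₁ ⊢
  simp only [Complex.ext_iff, Complex.add_re, Complex.add_im, Complex.neg_re, Complex.neg_im,
    Complex.mul_re, Complex.mul_im, Complex.ofReal_re, Complex.ofReal_im, Complex.I_re,
    Complex.I_im] at h₀ h₁ h₂
  obtain ⟨h₁re, h₁im⟩ := h₁
  exact density_identity_real (c := c) hz hB₀ (by linarith) (by linarith) (by linarith)
    (by linarith)

section RealPolynomials

variable {f : ℕ → ℂ → ℂ} {N : ℕ} {P Q : ℂ → ℂ} {c : ℂ}

theorem ChristoffelDarboux.sub_conj_mul_B0 (h : ChristoffelDarboux (range (N + 1)) f P Q c)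
    (hf : ∀ j ∈ range (N + 1), IsRealPolynomialFun (f j)) (hP : IsRealPolynomialFun P)
    (hQ : IsRealPolynomialFun Q) (z : ℂ) :
    (z - conj z) * B0 f N z = c * (P z * conj (Q z) - Q z * conj (P z)) := by
  rw [ofReal_B0_eq_sum fun j hj => (hf j hj).map_conj z, ← hP.map_conj, ← hQ.map_conj]
  exact h.sub_mul_sum_eq z (conj z)

theorem ChristoffelDarboux.B0_add_sub_conj_mul_B1
    (h : ChristoffelDarboux (range (N + 1)) f P Q c)
    (hf : ∀ j ∈ range (N + 1), IsRealPolynomialFun (f j)) (hP : IsRealPolynomialFun P)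
    (hQ : IsRealPolynomialFun Q) (z : ℂ) :
    B0 f N z + (z - conj z) * B1 f N z =
      c * (deriv P z * conj (Q z) - deriv Q z * conj (P z)) := by
  rw [ofReal_B0_eq_sum fun j hj => (hf j hj).map_conj z,
    B1_eq_sum fun j hj => (hf j hj).map_conj z, ← hP.map_conj, ← hQ.map_conj]
  exact h.sub_mul_sum_eq_deriv_fst (fun j hj => (hf j hj).differentiable) hP.differentiable
    hQ.differentiable z (conj z)

theorem ChristoffelDarboux.conj_B1_sub_B1_add_sub_conj_mul_B2
    (h : ChristoffelDarboux (range (N + 1)) f P Q c)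
    (hf : ∀ j ∈ range (N + 1), IsRealPolynomialFun (f j)) (hP : IsRealPolynomialFun P)
    (hQ : IsRealPolynomialFun Q) (z : ℂ) :
    conj (B1 f N z) - B1 f N z + (z - conj z) * B2 f N z =
      c * (deriv P z * conj (deriv Q z) - deriv Q z * conj (deriv P z)) := by
  rw [conj_B1_eq_sum fun j hj => (hf j hj).deriv_map_conj z,
    B1_eq_sum fun j hj => (hf j hj).map_conj z,
    ofReal_B2_eq_sum fun j hj => (hf j hj).deriv_map_conj z, ← hP.deriv_map_conj,
    ← hQ.deriv_map_conj]
  exact h.sub_mul_sum_eq_deriv_fst_snd (fun j hj => (hf j hj).differentiable) hP.differentiable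
    hQ.differentiable z (conj z)

end RealPolynomials

theorem density_orthogonal_real_line_level_zero_general (N : ℕ)
    (p : ℕ → ℂ → ℂ) (c : ℝ)
    (hreal : ∀ j ≤ N + 1, ∃ q : Polynomial ℝ, ∀ z : ℂ, p j z = Polynomial.aeval z q)
    (hCD : ∀ z w : ℂ, z ≠ w →
      ∑ j ∈ Finset.range (N + 1), p j z * p j w =
        (c : ℂ) * (p (N + 1) z * p N w - p N z * p (N + 1) w) / (z - w))
    (z : ℂ) (hz : z.im ≠ 0)
    (hB0 : 0 < B0 p N z) :
    hDen p N 0 0 z =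
      1 / Real.pi *
        ((deriv (p (N + 1)) z * (starRingEnd ℂ) (deriv (p N) z)).im /
            (p (N + 1) z * (starRingEnd ℂ) (p N z)).im -
          ‖(starRingEnd ℂ) (p N z) * deriv (p (N + 1)) z -
              (starRingEnd ℂ) (p (N + 1) z) * deriv (p N) z‖ ^ 2 /
            (4 * (p (N + 1) z * (starRingEnd ℂ) (p N z)).im ^ 2) +
          1 / (4 * z.im ^ 2)) := by
  have hf : ∀ j ∈ range (N + 1), IsRealPolynomialFun (p j) := fun j hj =>
    hreal j (Nat.le_succ_of_le (mem_range_succ_iff.mp hj))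
  have hP : IsRealPolynomialFun (p (N + 1)) := hreal _ le_rfl
  have hQ : IsRealPolynomialFun (p N) := hreal _ N.le_succ
  have hCD' : ChristoffelDarboux (range (N + 1)) p (p (N + 1)) (p N) c := hCD
  rw [hDen_zero_zero, ← density_identity hz hB0.ne' (hCD'.sub_conj_mul_B0 hf hP hQ z)
    (hCD'.B0_add_sub_conj_mul_B1 hf hP hQ z) (hCD'.conj_B1_sub_B1_add_sub_conj_mul_B2 hf hP hQ z)]
  ring

/-- Theorem: density of complex zeros of random sums of polynomials
orthonormal on the real line, at the level `K = (0,0)`. -/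
theorem density_orthogonal_real_line_level_zero (N : ℕ) (hN : 0 < N)
    (p : ℕ → ℂ → ℂ) (c : ℝ) (hc : c ≠ 0)
    (hreal : ∀ j ≤ N + 1, ∃ q : Polynomial ℝ, ∀ z : ℂ, p j z = Polynomial.aeval z q)
    (hCD : ∀ z w : ℂ, z ≠ w →
      ∑ j ∈ Finset.range (N + 1), p j z * p j w =
        (c : ℂ) * (p (N + 1) z * p N w - p N z * p (N + 1) w) / (z - w))
    (z : ℂ) (hz : z.im ≠ 0)
    (hB0 : 0 < B0 p N z) :
    hDen p N 0 0 z =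
      1 / Real.pi *
        ((deriv (p (N + 1)) z * (starRingEnd ℂ) (deriv (p N) z)).im /
            (p (N + 1) z * (starRingEnd ℂ) (p N z)).im -
          ‖(starRingEnd ℂ) (p N z) * deriv (p (N + 1)) z -
              (starRingEnd ℂ) (p (N + 1) z) * deriv (p N) z‖ ^ 2 /
            (4 * (p (N + 1) z * (starRingEnd ℂ) (p N z)).im ^ 2) +
          1 / (4 * z.im ^ 2)) :=
  density_orthogonal_real_line_level_zero_general N p c hreal hCD z hz hB0
end
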